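/- arXiv:math/0309380 — 2 statements merged into one kernel-verified Lean document; each statement's English description precedes it below -/
import Mathlib

section
/- There is a bijection between the layered acyclic orientations of the lexicographic product G^k and the acyclic orientations of G, given by restricting a layered orientation to any single layer. -/
open SimpleGraph

open scoped Classical

noncomputable section

/-- An orientation of an undirected graph `G`: each edge receives exactly one
direction. -/
structure GraphOrientation {V : Type*} (G : SimpleGraph V) where
  dir : V → V → Prop
  dir_iff : ∀ u v, G.Adj u v ↔ (dir u v ∨ dir v u)
  not_both : ∀ u v, dir u v → ¬ dir v u

/-- An orientation is acyclic if it produces no directed cycle. -/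
def GraphOrientation.Acyclic {V : Type*} {G : SimpleGraph V}
    (ω : GraphOrientation G) : Prop :=
  ∀ v, ¬ Relation.TransGen ω.dir v v

/-- The number of nodes on a longest directed path of the relation `dir`. -/
def dirPathLen {V : Type*} (dir : V → V → Prop) : ℕ :=
  sSup {n | ∃ l : List V, l.Chain' dir ∧ l.length = n}

/-- The lexicographic product `G^k` of `G` with the complete graph on `k`
nodes: nodes `i^1, …, i^k` for each node `i` of `G`; all pairs `i^a, i^b`
(`a ≠ b`) are adjacent, and `i^a` is adjacent to `j^b` whenever `(i,j)` is an
edge of `G`. -/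
def lexProd {V : Type*} (G : SimpleGraph V) (k : ℕ) : SimpleGraph (V × Fin k) where
  Adj x y := G.Adj x.1 y.1 ∨ (x.1 = y.1 ∧ x.2 ≠ y.2)
  symm := ⟨fun x y h => by
    rcases h with h | ⟨h1, h2⟩
    · exact Or.inl h.symm
    · exact Or.inr ⟨h1.symm, h2.symm⟩⟩
  loopless := ⟨fun x h => by
    rcases h with h | ⟨h1, h2⟩
    · exact G.irrefl h
    · exact h2 rfl⟩

/-- A layered orientation of `G^k`: every edge between distinct layers points
from the higher layer to the lower one, and for each edge of `G` the `k`
within-layer copies receive the same orientation. -/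
def IsLayered {V : Type*} {G : SimpleGraph V} {k : ℕ}
    (φ : GraphOrientation (lexProd G k)) : Prop :=
  (∀ x y : V × Fin k, (lexProd G k).Adj x y → y.2 < x.2 → φ.dir x y) ∧
  (∀ i j : V, ∀ a b : Fin k, φ.dir (i, a) (j, a) → φ.dir (i, b) (j, b))

/-- A `k`-tuple coloring of `G`, recorded as the increasing list
`c v 0 < c v 1 < ⋯` of the `k` distinct colors of each node `v`; adjacent
nodes share no color. -/
def IsKTupleColoring {V : Type*} (G : SimpleGraph V) (k : ℕ)
    (c : V → Fin k → ℕ) : Prop :=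
  (∀ v, StrictMono (c v)) ∧ ∀ u v, G.Adj u v → ∀ a b, c u a ≠ c v b

/-- The colors of `u` and `v` strictly alternate, starting with `u`:
`c u 0 < c v 0 < c u 1 < c v 1 < ⋯ < c u (k-1) < c v (k-1)`. -/
def Alt {V : Type*} (k : ℕ) (c : V → Fin k → ℕ) (u v : V) : Prop :=
  (∀ a : Fin k, c u a < c v a) ∧
  ∀ (a : Fin k) (h : (a : ℕ) + 1 < k), c v a < c u ⟨(a : ℕ) + 1, h⟩

/-- An interleaved `k`-tuple coloring: on every edge the two `k`-tuples of
colors strictly alternate. -/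
def IsInterleavedColoring {V : Type*} (G : SimpleGraph V) (k : ℕ)
    (c : V → Fin k → ℕ) : Prop :=
  IsKTupleColoring G k c ∧ ∀ u v, G.Adj u v → Alt k c u v ∨ Alt k c v u

/-- The `k`-chromatic number `χ^k(G)`: the least number of colors in a
`k`-tuple coloring of `G`. -/
def chiK {V : Type*} (G : SimpleGraph V) (k : ℕ) : ℕ :=
  sInf {n | ∃ c : V → Fin k → ℕ, IsKTupleColoring G k c ∧ ∀ v a, c v a < n}

/-- The interleaved `k`-chromatic number `χ_int^k(G)`. -/
def chiIntK {V : Type*} (G : SimpleGraph V) (k : ℕ) : ℕ :=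
  sInf {n | ∃ c : V → Fin k → ℕ, IsInterleavedColoring G k c ∧ ∀ v a, c v a < n}

/-- The chromatic number of `G`: the least number of colors in a proper
(1-tuple) coloring. -/
def chromNat {V : Type*} (G : SimpleGraph V) : ℕ :=
  sInf {n | ∃ c : V → ℕ, (∀ u v, G.Adj u v → c u ≠ c v) ∧ ∀ v, c v < n}

/-- The multichromatic number `χ^*(G) = inf_{k ≥ 1} χ^k(G)/k`. -/
def chiStar {V : Type*} (G : SimpleGraph V) : ℝ :=
  ⨅ k : ℕ+, (chiK G k : ℝ) / ((k : ℕ) : ℝ)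

/-- The interleaved multichromatic number
`χ_int^*(G) = inf_{k ≥ 1} χ_int^k(G)/k`. -/
def chiIntStar {V : Type*} (G : SimpleGraph V) : ℝ :=
  ⨅ k : ℕ+, (chiIntK G k : ℝ) / ((k : ℕ) : ℝ)

/-- `m(κ⁺, ω)`: the number of edges of the closed walk `κ` oriented by `ω` in
the traversal direction of `κ`. -/
def mFwd {V : Type*} {G : SimpleGraph V} {v : V} (ω : GraphOrientation G)
    (κ : G.Walk v v) : ℕ :=
  (κ.darts.filter (fun d => decide (ω.dir d.toProd.1 d.toProd.2))).length

/-- `m(κ⁻, ω)`: the number of edges of the closed walk `κ` oriented by `ω`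
against the traversal direction of `κ`. -/
def mBwd {V : Type*} {G : SimpleGraph V} {v : V} (ω : GraphOrientation G)
    (κ : G.Walk v v) : ℕ :=
  (κ.darts.filter (fun d => decide (ω.dir d.toProd.2 d.toProd.1))).length

end

/-!
Restricting to a layer and the lift that orients every layer like `ω` and every edge between
layers downwards are mutually inverse, because a layered orientation is determined by any one
of its layers. The lift is acyclic since its directed paths never climb a layer, so a directed
cycle stays inside one layer, where it is a directed cycle of `ω`.
-/

def layerEmbedding {V : Type*} (G : SimpleGraph V) (k : ℕ) (a : Fin k) : G ↪g lexProd G k where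
  toFun v := (v, a)
  inj' := Prod.mk_left_injective a
  map_rel_iff' := by simp [lexProd]

namespace GraphOrientation

variable {V W : Type*} {G : SimpleGraph V} {H : SimpleGraph W} {k : ℕ}

theorem ext {ω₁ ω₂ : GraphOrientation G} (h : ∀ u v, ω₁.dir u v ↔ ω₂.dir u v) : ω₁ = ω₂ := by
  obtain ⟨d₁, _, _⟩ := ω₁
  obtain ⟨d₂, _, _⟩ := ω₂
  obtain rfl : d₁ = d₂ := funext₂ fun u v => propext (h u v)
  rfl

theorem adj_of_dir (ω : GraphOrientation G) {u v : V} (h : ω.dir u v) : G.Adj u v :=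
  (ω.dir_iff u v).mpr (Or.inl h)

def comap (f : G ↪g H) (φ : GraphOrientation H) : GraphOrientation G where
  dir u v := φ.dir (f u) (f v)
  dir_iff u v := by rw [← f.map_adj_iff, φ.dir_iff]
  not_both _ _ := φ.not_both _ _

theorem Acyclic.comap {φ : GraphOrientation H} (hφ : φ.Acyclic) (f : G ↪g H) :
    (φ.comap f).Acyclic :=
  fun v hv => hφ (f v) (hv.lift f fun _ _ h => h)

def layeredLift (k : ℕ) (ω : GraphOrientation G) : GraphOrientation (lexProd G k) where
  dir x y := (y.2 < x.2 ∧ (lexProd G k).Adj x y) ∨ (x.2 = y.2 ∧ ω.dir x.1 y.1)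
  dir_iff x y := by
    constructor
    · intro hadj
      rcases lt_trichotomy x.2 y.2 with hlt | heq | hgt
      · exact Or.inr (Or.inl ⟨hlt, hadj.symm⟩)
      · have hG : G.Adj x.1 y.1 := hadj.resolve_right fun h => h.2 heq
        rcases (ω.dir_iff x.1 y.1).mp hG with h | h
        · exact Or.inl (Or.inr ⟨heq, h⟩)
        · exact Or.inr (Or.inr ⟨heq.symm, h⟩)
      · exact Or.inl (Or.inl ⟨hgt, hadj⟩)
    · rintro ((⟨_, h⟩ | ⟨_, h⟩) | (⟨_, h⟩ | ⟨_, h⟩))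
      · exact h
      · exact Or.inl (ω.adj_of_dir h)
      · exact h.symm
      · exact Or.inl (ω.adj_of_dir h).symm
  not_both _ _ := by
    rintro (⟨hlt, -⟩ | ⟨heq, h⟩) (⟨hlt', -⟩ | ⟨heq', h'⟩)
    · exact lt_asymm hlt hlt'
    · exact hlt.ne heq'
    · exact hlt'.ne heq
    · exact ω.not_both _ _ h h'

theorem isLayered_layeredLift (ω : GraphOrientation G) : IsLayered (layeredLift k ω) := by
  refine ⟨fun x y hadj hlt => Or.inl ⟨hlt, hadj⟩, ?_⟩
  rintro i j a b (⟨hlt, -⟩ | ⟨-, h⟩)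
  · exact absurd hlt (lt_irrefl a)
  · exact Or.inr ⟨rfl, h⟩

theorem transGen_layeredLift {ω : GraphOrientation G} {x y : V × Fin k}
    (h : Relation.TransGen (layeredLift k ω).dir x y) :
    y.2 < x.2 ∨ (x.2 = y.2 ∧ Relation.TransGen ω.dir x.1 y.1) := by
  induction h with
  | single h =>
    rcases h with ⟨hlt, -⟩ | ⟨heq, h⟩
    · exact Or.inl hlt
    · exact Or.inr ⟨heq, .single h⟩
  | tail _ h ih =>
    rcases h with ⟨hlt, -⟩ | ⟨heq, h⟩
    · rcases ih with hlt' | ⟨heq', -⟩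
      · exact Or.inl (hlt.trans hlt')
      · exact Or.inl (heq' ▸ hlt)
    · rcases ih with hlt' | ⟨heq', h'⟩
      · exact Or.inl (heq ▸ hlt')
      · exact Or.inr ⟨heq'.trans heq, h'.tail h⟩

theorem Acyclic.layeredLift {ω : GraphOrientation G} (hω : ω.Acyclic) :
    (layeredLift k ω).Acyclic := fun _ hx =>
  (transGen_layeredLift hx).elim (lt_irrefl _) fun h => hω _ h.2

theorem comap_layerEmbedding_layeredLift (ω : GraphOrientation G) (a : Fin k) :
    (layeredLift k ω).comap (layerEmbedding G k a) = ω :=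
  ext fun i j => by simp [comap, layerEmbedding, layeredLift]

end GraphOrientation

open GraphOrientation

namespace IsLayered

variable {V : Type*} {G : SimpleGraph V} {k : ℕ} {φ : GraphOrientation (lexProd G k)}

theorem dir_layer_iff (hφ : IsLayered φ) (i j : V) (a b : Fin k) :
    φ.dir (i, a) (j, a) ↔ φ.dir (i, b) (j, b) :=
  ⟨hφ.2 i j a b, hφ.2 i j b a⟩

theorem eq_layeredLift_comap (hφ : IsLayered φ) (a : Fin k) :
    φ = layeredLift k (φ.comap (layerEmbedding G k a)) := by
  refine ext fun ⟨i, b⟩ ⟨j, c⟩ => ⟨fun h => ?_, ?_⟩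
  · rcases lt_trichotomy b c with hlt | rfl | hgt
    · exact absurd (hφ.1 _ _ (φ.adj_of_dir h).symm hlt) (φ.not_both _ _ h)
    · exact Or.inr ⟨rfl, (hφ.dir_layer_iff i j b a).mp h⟩
    · exact Or.inl ⟨hgt, φ.adj_of_dir h⟩
  · rintro (⟨hlt, hadj⟩ | ⟨rfl, h⟩)
    · exact hφ.1 _ _ hadj hlt
    · exact (hφ.dir_layer_iff i j b a).mpr h

end IsLayered

theorem stmt6_general {V : Type*} (G : SimpleGraph V) (k : ℕ) (hk : 1 ≤ k) :
    ∃ F : {φ : GraphOrientation (lexProd G k) // IsLayered φ ∧ φ.Acyclic} ≃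
          {ω : GraphOrientation G // ω.Acyclic},
      ∀ (φ : {φ : GraphOrientation (lexProd G k) // IsLayered φ ∧ φ.Acyclic})
        (i j : V) (a : Fin k), (F φ).1.dir i j ↔ φ.1.dir (i, a) (j, a) := by
  let a₀ : Fin k := ⟨0, hk⟩
  refine ⟨{
    toFun := fun φ => ⟨φ.1.comap (layerEmbedding G k a₀), φ.2.2.comap _⟩
    invFun := fun ω => ⟨layeredLift k ω.1, isLayered_layeredLift ω.1, ω.2.layeredLift⟩
    left_inv := fun φ => Subtype.ext (φ.2.1.eq_layeredLift_comap a₀).symm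
    right_inv := fun ω => Subtype.ext (comap_layerEmbedding_layeredLift ω.1 a₀) }, ?_⟩
  exact fun φ i j a => φ.2.1.dir_layer_iff i j a₀ a

/-- There is a bijection between the layered acyclic orientations
of the lexicographic product `G^k` and the acyclic orientations of `G`, given
by restricting a layered orientation to any single layer. -/
theorem stmt6 {V : Type*} [Fintype V] (G : SimpleGraph V)
    (hE : G.edgeSet.Nonempty) (k : ℕ) (hk : 1 ≤ k) :
    ∃ F : {φ : GraphOrientation (lexProd G k) // IsLayered φ ∧ φ.Acyclic} ≃
          {ω : GraphOrientation G // ω.Acyclic},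
      ∀ (φ : {φ : GraphOrientation (lexProd G k) // IsLayered φ ∧ φ.Acyclic})
        (i j : V) (a : Fin k), (F φ).1.dir i j ↔ φ.1.dir (i, a) (j, a) :=
  stmt6_general G k hk
end

section
/- For any acyclic orientation ω of a graph G with at least one cycle, any simple cycle κ of G, and any k ≥ 1, the interleaved k-chromatic number satisfies χ_int^k(G)/k ≥ |κ| / min{m(κ+,ω_κ), m(κ-,ω_κ)} for the orientation ω_κ realizing the minimum; more precisely, for every layered acyclic orientation φ_ω^k of G^k corresponding to ω, the longest directed path length l satisfies l/k ≥ |κ| / min{m(κ+,ω), m(κ-,ω)}. -/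
open SimpleGraph

open scoped Classical

/-!
Give every node `u` numbers `c u 0, …, c u (k-1)`, all below `X`: either the colors of an
interleaved coloring with `X` colors, each edge oriented towards the larger first color, or the
depths of the copies `u^k, …, u^1` in an acyclic layered orientation of `G^k` whose longest path
has `X` nodes. Along every edge oriented `u → w` the two tuples alternate starting with `u`, so
the potential `∑ a, c u a` rises by at least `k` across an edge traversed forwards and falls by
at most `X - k` across an edge traversed backwards. Around the closed walk `κ` the potential
returns to its initial value, hence `k |κ| ≤ X m(κ⁻, ω)`; traversing `κ` the other way gives
`k |κ| ≤ X m(κ⁺, ω)`.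
-/

open Relation

section Chains

variable {α : Type*} {r : α → α → Prop}

theorem List.IsChain.nodup_of_acyclic (hr : ∀ a, ¬ TransGen r a a) {l : List α}
    (hl : l.IsChain r) : l.Nodup :=
  haveI : Std.Irrefl (TransGen r) := ⟨hr⟩
  (List.isChain_iff_pairwise.mp (hl.imp fun _ _ => TransGen.single)).nodup

theorem List.IsChain.length_le_card_of_acyclic [Fintype α] (hr : ∀ a, ¬ TransGen r a a)
    {l : List α} (hl : l.IsChain r) : l.length ≤ Fintype.card α :=
  (hl.nodup_of_acyclic hr).length_le_card

noncomputable def chainDepth (r : α → α → Prop) (x : α) : ℕ :=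
  sSup {n | ∃ l : List α, (l ++ [x]).IsChain r ∧ l.length = n}

variable [Fintype α]

theorem bddAbove_chainDepth_set (hr : ∀ a, ¬ TransGen r a a) (x : α) :
    BddAbove {n | ∃ l : List α, (l ++ [x]).IsChain r ∧ l.length = n} := by
  refine ⟨Fintype.card α, ?_⟩
  rintro _ ⟨l, hl, rfl⟩
  exact (hl.length_le_card_of_acyclic hr).trans' (by simp)

theorem exists_isChain_length_eq_chainDepth (hr : ∀ a, ¬ TransGen r a a) (x : α) :
    ∃ l : List α, (l ++ [x]).IsChain r ∧ l.length = chainDepth r x :=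
  Nat.sSup_mem (s := {n | ∃ l : List α, (l ++ [x]).IsChain r ∧ l.length = n})
    ⟨0, [], List.isChain_singleton x, rfl⟩ (bddAbove_chainDepth_set hr x)

theorem chainDepth_lt_of_rel (hr : ∀ a, ¬ TransGen r a a) {x y : α} (hxy : r x y) :
    chainDepth r x < chainDepth r y := by
  obtain ⟨l, hl, hlen⟩ := exists_isChain_length_eq_chainDepth hr x
  have hchain : ((l ++ [x]) ++ [y]).IsChain r := by
    simpa using List.isChain_append_cons_cons.mpr ⟨hl, hxy, List.isChain_singleton y⟩
  exact Nat.lt_of_succ_le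
    (le_csSup (bddAbove_chainDepth_set hr y) ⟨l ++ [x], hchain, by simp [hlen]⟩)

theorem chainDepth_lt_dirPathLen (hr : ∀ a, ¬ TransGen r a a) (x : α) :
    chainDepth r x < dirPathLen r := by
  obtain ⟨l, hl, hlen⟩ := exists_isChain_length_eq_chainDepth hr x
  refine Nat.lt_of_succ_le (le_csSup ⟨Fintype.card α, ?_⟩ ⟨l ++ [x], hl, by simp [hlen]⟩)
  rintro _ ⟨l', hl', rfl⟩
  exact hl'.length_le_card_of_acyclic hr

end Chains

section Potential

variable {V : Type*} {k X : ℕ} {c : V → Fin k → ℕ} {u w : V}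

theorem Alt.sum_add_le (h : Alt k c u w) : ∑ a, c u a + k ≤ ∑ a, c w a := by
  have hstep : ∑ a, (c u a + 1) ≤ ∑ a, c w a :=
    Finset.sum_le_sum fun a _ => Nat.succ_le_of_lt (h.1 a)
  simpa [Finset.sum_add_distrib] using hstep

theorem Alt.sum_add_le_sum_add (h : Alt k c w u) (hX : ∀ a, c u a < X) :
    ∑ a, c u a + k ≤ ∑ a, c w a + X := by
  cases k with
  | zero => simp
  | succ m =>
    have hstep : ∑ a : Fin m, (c u a.castSucc + 1) ≤ ∑ a : Fin m, c w a.succ :=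
      Finset.sum_le_sum fun a _ => h.2 a.castSucc a.succ.isLt
    have hlast := hX (Fin.last m)
    rw [Fin.sum_univ_castSucc, Fin.sum_univ_succ (f := c w)]
    simp only [Finset.sum_add_distrib, Finset.sum_const, Finset.card_univ, Fintype.card_fin,
      smul_eq_mul, mul_one] at hstep
    omega

end Potential

theorem SimpleGraph.Walk.add_mul_length_le {V : Type*} {G : SimpleGraph V} (Φ : V → ℕ)
    (P : G.Dart → Prop) (k X : ℕ)
    (h : ∀ d : G.Dart, Φ d.toProd.1 + k ≤ Φ d.toProd.2 + if P d then X else 0) {a b : V}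
    (p : G.Walk a b) :
    Φ a + k * p.length ≤ Φ b + X * (p.darts.filter fun d => decide (P d)).length := by
  induction p with
  | nil => simp
  | @cons a x b hadj q ih =>
    have hd := h ⟨(a, x), hadj⟩
    by_cases hP : P ⟨(a, x), hadj⟩
    · simp only [hP, if_true] at hd
      simp only [Walk.length_cons, Walk.darts_cons, List.filter_cons, hP, decide_true,
        if_true, List.length_cons]
      nlinarith
    · simp only [hP, if_false] at hd
      simp only [Walk.length_cons, Walk.darts_cons, List.filter_cons, hP, decide_false,
        Bool.false_eq_true, if_false]
      nlinarith

section Orientation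

variable {V : Type*} {G : SimpleGraph V} {v : V}

theorem mBwd_reverse (ω : GraphOrientation G) (κ : G.Walk v v) :
    mBwd ω κ.reverse = mFwd ω κ := by
  simp only [mBwd, mFwd, Walk.darts_reverse, List.filter_reverse, List.length_reverse,
    List.filter_map, List.length_map]
  rfl

theorem mul_length_le_mul_mBwd {k X : ℕ} (ω : GraphOrientation G) (c : V → Fin k → ℕ)
    (hX : ∀ u a, c u a < X) (halt : ∀ u w, ω.dir u w → Alt k c u w) (κ : G.Walk v v) :
    k * κ.length ≤ X * mBwd ω κ := by
  have hdart (d : G.Dart) : ∑ a, c d.toProd.1 a + k ≤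
      ∑ a, c d.toProd.2 a + if ω.dir d.toProd.2 d.toProd.1 then X else 0 := by
    split_ifs with hbwd
    · exact (halt _ _ hbwd).sum_add_le_sum_add (hX _)
    · have hfwd := ((ω.dir_iff _ _).mp d.adj).resolve_right hbwd
      simpa using (halt _ _ hfwd).sum_add_le
  exact Nat.le_of_add_le_add_left (κ.add_mul_length_le (fun u => ∑ a, c u a) _ k X hdart)

theorem mul_length_le_mul_min {k X : ℕ} (ω : GraphOrientation G) (c : V → Fin k → ℕ)
    (hX : ∀ u a, c u a < X) (halt : ∀ u w, ω.dir u w → Alt k c u w) (κ : G.Walk v v) :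
    k * κ.length ≤ X * min (mFwd ω κ) (mBwd ω κ) := by
  have hfwd := mul_length_le_mul_mBwd ω c hX halt κ.reverse
  rw [Walk.length_reverse, mBwd_reverse] at hfwd
  rw [mul_min]
  exact le_min hfwd (mul_length_le_mul_mBwd ω c hX halt κ)

def GraphOrientation.ofPotential (f : V → ℕ) (hf : ∀ u w, G.Adj u w → f u ≠ f w) :
    GraphOrientation G where
  dir u w := G.Adj u w ∧ f u < f w
  dir_iff u w := by
    refine ⟨fun h => ?_, fun h => h.elim And.left fun h' => h'.1.symm⟩
    rcases (hf u w h).lt_or_gt with hlt | hgt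
    exacts [Or.inl ⟨h, hlt⟩, Or.inr ⟨h.symm, hgt⟩]
  not_both _ _ h h' := h.2.asymm h'.2

theorem GraphOrientation.ofPotential_acyclic (f : V → ℕ) (hf : ∀ u w, G.Adj u w → f u ≠ f w) :
    (GraphOrientation.ofPotential f hf).Acyclic := fun x hx =>
  lt_irrefl (f x) (hx.trans_induction_on (motive := fun {a b} _ => f a < f b) And.right
    fun _ _ => lt_trans)

end Orientation

section Coloring

variable {V : Type*} {G : SimpleGraph V} {k : ℕ}

theorem IsInterleavedColoring.alt_of_lt {c : V → Fin k → ℕ} (hc : IsInterleavedColoring G k c)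
    {u w : V} (huw : G.Adj u w) {a : Fin k} (h : c u a < c w a) : Alt k c u w :=
  (hc.2 u w huw).resolve_right fun h' => (h'.1 a).asymm h

variable [Fintype V]

/-- Number the nodes `0, …, N-1` and give node `i` the colors `i, i + N, …, i + (k-1) N`. -/
theorem exists_isInterleavedColoring (G : SimpleGraph V) (k : ℕ) :
    ∃ n, ∃ c : V → Fin k → ℕ, IsInterleavedColoring G k c ∧ ∀ v a, c v a < n := by
  set e := Fintype.equivFin V
  set N := Fintype.card V
  let c : V → Fin k → ℕ := fun v a => finProdFinEquiv (a, e v)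
  have hc (v : V) (a : Fin k) : c v a = e v + N * a := finProdFinEquiv_apply_val _
  have halt {u w : V} (hlt : e u < e w) : Alt k c u w := by
    refine ⟨fun a => by simp only [hc]; omega, fun a ha => ?_⟩
    have hw := (e w).isLt
    simp only [hc, Nat.mul_succ]
    omega
  refine ⟨k * N, c, ⟨⟨fun v a b hab => ?_, fun u w huw a b hcol => ?_⟩, fun u w huw => ?_⟩,
    fun v a => (finProdFinEquiv (a, e v)).isLt⟩
  · have hN : 0 < N := Fintype.card_pos_iff.mpr ⟨v⟩
    simp only [hc]
    exact Nat.add_lt_add_left (Nat.mul_lt_mul_of_pos_left hab hN) _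
  · exact G.ne_of_adj huw
      (e.injective (congrArg Prod.snd (finProdFinEquiv.injective (Fin.ext hcol))))
  · have hne : e u ≠ e w := fun h => G.ne_of_adj huw (e.injective h)
    exact hne.lt_or_gt.imp halt halt

theorem exists_acyclic_mul_length_le_chiIntK (G : SimpleGraph V) (hk : 0 < k) {v : V}
    (κ : G.Walk v v) :
    ∃ ω : GraphOrientation G, ω.Acyclic ∧
      k * κ.length ≤ chiIntK G k * min (mFwd ω κ) (mBwd ω κ) := by
  obtain ⟨c, hc, hlt⟩ : ∃ c : V → Fin k → ℕ, IsInterleavedColoring G k c ∧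
      ∀ v a, c v a < chiIntK G k := Nat.sInf_mem (exists_isInterleavedColoring G k)
  let a₀ : Fin k := ⟨0, hk⟩
  have hinj (u w : V) (huw : G.Adj u w) : c u a₀ ≠ c w a₀ := hc.1.2 u w huw a₀ a₀
  let ω := GraphOrientation.ofPotential (c · a₀) hinj
  have halt (u w : V) (huw : ω.dir u w) : Alt k c u w := hc.alt_of_lt huw.1 huw.2
  exact ⟨ω, GraphOrientation.ofPotential_acyclic _ hinj, mul_length_le_mul_min ω c hlt halt κ⟩

end Coloring

theorem IsLayered.alt_chainDepth {V : Type*} {G : SimpleGraph V} {k : ℕ}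
    {ω : GraphOrientation G} {φ : GraphOrientation (lexProd G k)} [Fintype V]
    (hφ : φ.Acyclic) (hlay : IsLayered φ) (hω : ∀ i j ℓ, φ.dir (i, ℓ) (j, ℓ) ↔ ω.dir i j)
    {u w : V} (huw : ω.dir u w) : Alt k (fun i a => chainDepth φ.dir (i, a.rev)) u w := by
  refine ⟨fun a => chainDepth_lt_of_rel hφ ((hω u w a.rev).mpr huw), fun a ha => ?_⟩
  have hadj : G.Adj w u := (ω.dir_iff w u).mpr (Or.inr huw)
  have hlayer : (⟨a + 1, ha⟩ : Fin k).rev < a.rev :=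
    Fin.rev_lt_rev.mpr (Fin.lt_def.mpr (Nat.lt_succ_self _))
  exact chainDepth_lt_of_rel hφ (hlay.1 (w, a.rev) (u, _) (Or.inl hadj) hlayer)

theorem Nat.cast_div_le_cast_div_of_mul_le_mul {L M X k : ℕ} (hk : 0 < k) (h : k * L ≤ X * M) :
    (L : ℝ) / M ≤ X / k := by
  rcases M.eq_zero_or_pos with rfl | hM
  · simp only [Nat.cast_zero, div_zero]
    positivity
  · rw [div_le_div_iff₀ (by exact_mod_cast hM) (by exact_mod_cast hk)]
    exact_mod_cast (mul_comm L k).trans_le h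

theorem stmt13_general {V : Type*} [Fintype V] (G : SimpleGraph V)
    (ω : GraphOrientation G)
    (v : V) (κ : G.Walk v v) (k : ℕ) (hk : 1 ≤ k) :
    (sInf { r : ℝ | ∃ ω' : GraphOrientation G, ω'.Acyclic ∧
        r = (κ.length : ℝ) / ((min (mFwd ω' κ) (mBwd ω' κ) : ℕ) : ℝ) } ≤
      (chiIntK G k : ℝ) / (k : ℝ)) ∧
    ∀ φ : GraphOrientation (lexProd G k), φ.Acyclic → IsLayered φ →
      (∀ (i j : V) (ℓ : Fin k), φ.dir (i, ℓ) (j, ℓ) ↔ ω.dir i j) →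
      (κ.length : ℝ) / ((min (mFwd ω κ) (mBwd ω κ) : ℕ) : ℝ) ≤
        (dirPathLen φ.dir : ℝ) / (k : ℝ) := by
  refine ⟨?_, fun φ hφ hlay hω => ?_⟩
  · obtain ⟨ω', hω', hle⟩ := exists_acyclic_mul_length_le_chiIntK G hk κ
    refine le_trans (csInf_le ?_ ?_) (Nat.cast_div_le_cast_div_of_mul_le_mul hk hle)
    · refine ⟨0, ?_⟩
      rintro _ ⟨_, _, rfl⟩
      positivity
    · exact ⟨ω', hω', rfl⟩
  · exact Nat.cast_div_le_cast_div_of_mul_le_mul hk <|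
      mul_length_le_mul_min ω _ (fun _ _ => chainDepth_lt_dirPathLen hφ _)
        (fun _ _ => hlay.alt_chainDepth hφ hω) κ

/-- For any acyclic orientation `ω` of a graph `G` with at least
one cycle, any simple cycle `κ` of `G`, and any `k ≥ 1`:
`χ_int^k(G)/k ≥ |κ| / min {m(κ⁺,ω'), m(κ⁻,ω')}` for an orientation `ω'`
realizing the minimum of that ratio; more precisely, for every layered acyclic
orientation `φ` of `G^k` corresponding to `ω`, the longest directed path
length `l` satisfies `l/k ≥ |κ| / min {m(κ⁺,ω), m(κ⁻,ω)}`. -/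
theorem stmt13 {V : Type*} [Fintype V] (G : SimpleGraph V)
    (ω : GraphOrientation G) (hac : ω.Acyclic)
    (v : V) (κ : G.Walk v v) (hκ : κ.IsCycle) (k : ℕ) (hk : 1 ≤ k) :
    (sInf { r : ℝ | ∃ ω' : GraphOrientation G, ω'.Acyclic ∧
        r = (κ.length : ℝ) / ((min (mFwd ω' κ) (mBwd ω' κ) : ℕ) : ℝ) } ≤
      (chiIntK G k : ℝ) / (k : ℝ)) ∧
    ∀ φ : GraphOrientation (lexProd G k), φ.Acyclic → IsLayered φ →
      (∀ (i j : V) (ℓ : Fin k), φ.dir (i, ℓ) (j, ℓ) ↔ ω.dir i j) →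
      (κ.length : ℝ) / ((min (mFwd ω κ) (mBwd ω κ) : ℕ) : ℝ) ≤
        (dirPathLen φ.dir : ℝ) / (k : ℝ) :=
  stmt13_general G ω v κ k hk
end
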